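/- Let Σ satisfy hypothesis (Lip) and be uniformly bounded above by n > 0 (i.e. Σ[μ](x) ≤ n for all nonnegative finite μ and all x). Let μ₀ be a nonnegative finite measure, T > 0, and let (ν¹_t)_{0≤t≤T}, (ν²_t)_{0≤t≤T} be two continuous families of nonnegative finite measures with ν¹₀ = ν²₀ = μ₀ and sup_{t∈[0,T]} ‖ν^i_t‖_TV ≤ 2‖μ₀‖_TV for i = 1,2. Then sup_{t∈[0,T]} ‖μ₀ M^{(ν¹)}_{0,t} − μ₀ M^{(ν²)}_{0,t}‖_TV ≤ k(2‖μ₀‖_TV) · T · e^{nT} · ‖μ₀‖_TV · sup_{t∈[0,T]} ‖ν¹_t − ν²_t‖_TV, where μ₀ M^{(ν)}_{0,t} is the measure defined by f ↦ ∫_X f(x) e^{∫_0^t Σ[ν_σ](x) dσ} dμ₀(x). -/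

import Mathlib

open MeasureTheory Filter Set

/-- Total variation distance between two (Borel) measures, `‖μ - ν‖_TV`. -/
noncomputable def tvDist {Y : Type*} [MeasurableSpace Y] (μ ν : Measure Y) : ℝ :=
  ((μ - ν) Set.univ + (ν - μ) Set.univ).toReal

/-- `f` is a bounded Borel function. -/
def IsBoundedBorel {Y : Type*} [MeasurableSpace Y] (f : Y → ℝ) : Prop :=
  Measurable f ∧ ∃ C, ∀ x, |f x| ≤ C

/-- The measure `μ₀ M^{(ν)}_{0,t}` defined by
`f ↦ ∫_X f(x) e^{∫_0^t Σ[ν_σ](x) dσ} dμ₀(x)`. -/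
noncomputable def semigroupMeasure {Y : Type*} [MeasurableSpace Y]
    (μ₀ : Measure Y) (Sig : FiniteMeasure Y → Y → ℝ)
    (ν : ℝ → FiniteMeasure Y) (t : ℝ) : Measure Y :=
  μ₀.withDensity fun x => ENNReal.ofReal (Real.exp (∫ σ in (0:ℝ)..t, Sig (ν σ) x))

open scoped ENNReal

lemma aux_exp_lip {a b M : ℝ} (ha : a ≤ M) (hb : b ≤ M) :
    |Real.exp a - Real.exp b| ≤ Real.exp M * |a - b| := by
  wlog hab : b ≤ a generalizing a b
  · rw [abs_sub_comm, abs_sub_comm a b]; exact this hb ha (le_of_not_ge hab)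
  have h1 : Real.exp b ≤ Real.exp a := Real.exp_le_exp.2 hab
  have h2 : Real.exp a ≤ Real.exp M := Real.exp_le_exp.2 ha
  rw [abs_of_nonneg (by linarith), abs_of_nonneg (by linarith)]
  have h3 : (b - a) + 1 ≤ Real.exp (b - a) := Real.add_one_le_exp _
  have h4 : Real.exp (b - a) * Real.exp a = Real.exp b := by
    rw [← Real.exp_add]; ring_nf
  have h5 : Real.exp a > 0 := Real.exp_pos _
  nlinarith

lemma aux_floor_tendsto (σ : ℝ) :
    Tendsto (fun N : ℕ => ((⌊σ * ((N : ℝ) + 1)⌋ : ℝ) / ((N : ℝ) + 1))) atTop (nhds σ) := by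
  rw [tendsto_iff_dist_tendsto_zero]
  apply squeeze_zero (fun _ => dist_nonneg) (g := fun N : ℕ => 1 / ((N : ℝ) + 1))
  · intro N
    have hc : (0 : ℝ) < (N : ℝ) + 1 := by positivity
    have h1 : ((⌊σ * ((N : ℝ) + 1)⌋ : ℝ)) ≤ σ * ((N : ℝ) + 1) := Int.floor_le _
    have h2 : σ * ((N : ℝ) + 1) < (⌊σ * ((N : ℝ) + 1)⌋ : ℝ) + 1 := Int.lt_floor_add_one _
    rw [Real.dist_eq]
    have heq : (⌊σ * ((N : ℝ) + 1)⌋ : ℝ) / ((N : ℝ) + 1) - σ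
        = ((⌊σ * ((N : ℝ) + 1)⌋ : ℝ) - σ * ((N : ℝ) + 1)) / ((N : ℝ) + 1) := by
      field_simp
    rw [heq, abs_div, abs_of_pos hc]
    gcongr
    rw [abs_le]; constructor <;> linarith
  · exact tendsto_one_div_add_atTop_nhds_zero_nat

lemma aux_ofReal_tsub {a b c : ℝ} (ha : 0 ≤ a) (hb : 0 ≤ b) (h : |a - b| ≤ c) :
    (ENNReal.ofReal a - ENNReal.ofReal b) + (ENNReal.ofReal b - ENNReal.ofReal a)
      ≤ ENNReal.ofReal c := by
  rcases le_total b a with hba | hab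
  · rw [tsub_eq_zero_of_le (ENNReal.ofReal_le_ofReal hba), add_zero,
      ← ENNReal.ofReal_sub _ hb]
    exact ENNReal.ofReal_le_ofReal (by rw [abs_of_nonneg (by linarith)] at h; linarith)
  · rw [tsub_eq_zero_of_le (ENNReal.ofReal_le_ofReal hab), zero_add,
      ← ENNReal.ofReal_sub _ ha]
    exact ENNReal.ofReal_le_ofReal (by rw [abs_of_nonpos (by linarith)] at h; linarith)

lemma aux_tvDist_nonneg {Y : Type*} [MeasurableSpace Y] (μ ν : Measure Y) : 0 ≤ tvDist μ ν :=
  ENNReal.toReal_nonneg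

lemma aux_tvDist_le {Y : Type*} [MeasurableSpace Y] (μ ν : Measure Y)
    [IsFiniteMeasure μ] [IsFiniteMeasure ν] :
    tvDist μ ν ≤ (μ Set.univ).toReal + (ν Set.univ).toReal := by
  have h1 : (μ - ν) Set.univ ≤ μ Set.univ := Measure.le_iff'.1 Measure.sub_le Set.univ
  have h2 : (ν - μ) Set.univ ≤ ν Set.univ := Measure.le_iff'.1 Measure.sub_le Set.univ
  have hfin : μ Set.univ + ν Set.univ ≠ ⊤ :=
    ENNReal.add_ne_top.2 ⟨measure_ne_top _ _, measure_ne_top _ _⟩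
  calc tvDist μ ν ≤ (μ Set.univ + ν Set.univ).toReal :=
        ENNReal.toReal_mono hfin (add_le_add h1 h2)
    _ = (μ Set.univ).toReal + (ν Set.univ).toReal :=
        ENNReal.toReal_add (measure_ne_top _ _) (measure_ne_top _ _)

/-- TV estimate between two `withDensity` measures with densities `ofReal ∘ eᵢ`,
when `|e1 - e2| ≤ C` pointwise. -/
lemma aux_tv_withDensity {Y : Type*} [MeasurableSpace Y] (μ : Measure Y)
    [IsFiniteMeasure μ] (e1 e2 : Y → ℝ) (he1 : Measurable e1) (he2 : Measurable e2)
    (h1 : ∀ x, 0 ≤ e1 x) (h2 : ∀ x, 0 ≤ e2 x)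
    {C : ℝ} (hC : 0 ≤ C) (hb : ∀ x, |e1 x - e2 x| ≤ C) :
    tvDist (μ.withDensity fun x => ENNReal.ofReal (e1 x))
        (μ.withDensity fun x => ENNReal.ofReal (e2 x))
      ≤ C * (μ Set.univ).toReal := by
  set g1 : Y → ℝ≥0∞ := fun x => ENNReal.ofReal (e1 x) with hg1
  set g2 : Y → ℝ≥0∞ := fun x => ENNReal.ofReal (e2 x) with hg2
  have hgm1 : Measurable g1 := ENNReal.measurable_ofReal.comp he1
  have hgm2 : Measurable g2 := ENNReal.measurable_ofReal.comp he2
  have hd : Measurable (fun x => g1 x - g2 x) := hgm1.sub hgm2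
  have hd' : Measurable (fun x => g2 x - g1 x) := hgm2.sub hgm1
  have hle1 : μ.withDensity g1 ≤ μ.withDensity (fun x => g1 x - g2 x) + μ.withDensity g2 := by
    rw [← withDensity_add_left hd g2]
    exact withDensity_mono (Eventually.of_forall fun x => show g1 x ≤ g1 x - g2 x + g2 x from le_tsub_add)
  have hle2 : μ.withDensity g2 ≤ μ.withDensity (fun x => g2 x - g1 x) + μ.withDensity g1 := by
    rw [← withDensity_add_left hd' g1]
    exact withDensity_mono (Eventually.of_forall fun x => show g2 x ≤ g2 x - g1 x + g1 x from le_tsub_add)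
  have ev1 : (μ.withDensity g1 - μ.withDensity g2) Set.univ ≤ ∫⁻ x, g1 x - g2 x ∂μ := by
    calc (μ.withDensity g1 - μ.withDensity g2) Set.univ
        ≤ (μ.withDensity fun x => g1 x - g2 x) Set.univ :=
          Measure.le_iff'.1 (Measure.sub_le_of_le_add hle1) Set.univ
      _ = ∫⁻ x, g1 x - g2 x ∂μ := by
          rw [withDensity_apply _ MeasurableSet.univ, Measure.restrict_univ]
  have ev2 : (μ.withDensity g2 - μ.withDensity g1) Set.univ ≤ ∫⁻ x, g2 x - g1 x ∂μ := by
    calc (μ.withDensity g2 - μ.withDensity g1) Set.univ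
        ≤ (μ.withDensity fun x => g2 x - g1 x) Set.univ :=
          Measure.le_iff'.1 (Measure.sub_le_of_le_add hle2) Set.univ
      _ = ∫⁻ x, g2 x - g1 x ∂μ := by
          rw [withDensity_apply _ MeasurableSet.univ, Measure.restrict_univ]
  have hsum : (μ.withDensity g1 - μ.withDensity g2) Set.univ
      + (μ.withDensity g2 - μ.withDensity g1) Set.univ ≤ ENNReal.ofReal C * μ Set.univ := by
    calc (μ.withDensity g1 - μ.withDensity g2) Set.univ
        + (μ.withDensity g2 - μ.withDensity g1) Set.univ
        ≤ (∫⁻ x, g1 x - g2 x ∂μ) + ∫⁻ x, g2 x - g1 x ∂μ := add_le_add ev1 ev2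
      _ = ∫⁻ x, (g1 x - g2 x) + (g2 x - g1 x) ∂μ := (lintegral_add_left hd _).symm
      _ ≤ ∫⁻ _, ENNReal.ofReal C ∂μ :=
          lintegral_mono fun x => aux_ofReal_tsub (h1 x) (h2 x) (hb x)
      _ = ENNReal.ofReal C * μ Set.univ := lintegral_const _
  calc tvDist (μ.withDensity g1) (μ.withDensity g2)
      ≤ (ENNReal.ofReal C * μ Set.univ).toReal :=
        ENNReal.toReal_mono (ENNReal.mul_ne_top ENNReal.ofReal_ne_top (measure_ne_top _ _)) hsum
    _ = C * (μ Set.univ).toReal := by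
        rw [ENNReal.toReal_mul, ENNReal.toReal_ofReal hC]

/-- Contraction estimate for the semigroup map: if `Σ` satisfies (Lip)
and is uniformly bounded above by `n > 0`, and `ν1, ν2` are continuous families of
nonnegative finite measures starting at `μ₀` with masses bounded by `2‖μ₀‖_TV`, then
`sup_{t∈[0,T]} ‖μ₀M^{(ν1)}_{0,t} − μ₀M^{(ν2)}_{0,t}‖_TV
  ≤ k(2‖μ₀‖)·T·e^{nT}·‖μ₀‖·sup_{t∈[0,T]}‖ν1_t − ν2_t‖_TV`. -/
theorem semigroup_contraction {d : ℕ} (X : Set (EuclideanSpace ℝ (Fin d)))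
    (hX : IsCompact X)
    (Sig : FiniteMeasure X → X → ℝ) (hB : ∀ μ, IsBoundedBorel (Sig μ))
    (k : ℝ → ℝ) (hk_pos : ∀ r > 0, 0 < k r)
    (hk_loc : ∀ R > 0, ∃ K, ∀ r ∈ Set.Ioc (0:ℝ) R, k r ≤ K)
    (hLip : ∀ r > 0, ∀ μ ν : FiniteMeasure X, (μ.mass : ℝ) ≤ r → (ν.mass : ℝ) ≤ r →
      ∀ x, |Sig μ x - Sig ν x| ≤ k r * tvDist (μ : Measure X) (ν : Measure X))
    (n : ℝ) (hn : 0 < n) (hbd : ∀ (μ : FiniteMeasure X) (x : X), Sig μ x ≤ n)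
    (μ₀ : FiniteMeasure X) (T : ℝ) (hT : 0 < T)
    (ν1 ν2 : ℝ → FiniteMeasure X)
    (hcont1 : ∀ t₀ ∈ Set.Icc (0:ℝ) T,
      Tendsto (fun t => tvDist (ν1 t : Measure X) (ν1 t₀ : Measure X))
        (nhdsWithin t₀ (Set.Icc 0 T)) (nhds 0))
    (hcont2 : ∀ t₀ ∈ Set.Icc (0:ℝ) T,
      Tendsto (fun t => tvDist (ν2 t : Measure X) (ν2 t₀ : Measure X))
        (nhdsWithin t₀ (Set.Icc 0 T)) (nhds 0))
    (hinit1 : ν1 0 = μ₀) (hinit2 : ν2 0 = μ₀)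
    (hbdd1 : ∀ t ∈ Set.Icc (0:ℝ) T, ((ν1 t).mass : ℝ) ≤ 2 * (μ₀.mass : ℝ))
    (hbdd2 : ∀ t ∈ Set.Icc (0:ℝ) T, ((ν2 t).mass : ℝ) ≤ 2 * (μ₀.mass : ℝ)) :
    ∀ t ∈ Set.Icc (0:ℝ) T,
      tvDist (semigroupMeasure (μ₀ : Measure X) Sig ν1 t)
          (semigroupMeasure (μ₀ : Measure X) Sig ν2 t)
        ≤ k (2 * (μ₀.mass : ℝ)) * T * Real.exp (n * T) * (μ₀.mass : ℝ) *
            ⨆ s : Set.Icc (0:ℝ) T, tvDist (ν1 (s : ℝ) : Measure X) (ν2 (s : ℝ) : Measure X) := by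
  intro t ht
  by_cases hm0 : μ₀.mass = 0
  · -- degenerate case : μ₀ = 0
    have hμ : (μ₀ : Measure X) = 0 := by
      have := (FiniteMeasure.mass_zero_iff μ₀).1 hm0
      rw [this]; rfl
    have hwd : ∀ (f : X → ℝ≥0∞), (0 : Measure X).withDensity f = 0 := by
      intro f
      ext s hs
      rw [withDensity_apply _ hs]
      simp
    have hz : tvDist (semigroupMeasure (μ₀ : Measure X) Sig ν1 t)
        (semigroupMeasure (μ₀ : Measure X) Sig ν2 t) = 0 := by
      simp only [semigroupMeasure, hμ, hwd, tvDist]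
      simp [Measure.sub_eq_zero_of_le le_rfl]
    rw [hz, hm0]
    have hS0 : 0 ≤ ⨆ s : Set.Icc (0:ℝ) T,
        tvDist (ν1 (s : ℝ) : Measure X) (ν2 (s : ℝ) : Measure X) :=
      Real.iSup_nonneg fun s => aux_tvDist_nonneg _ _
    simp
  · -- main case
    set m : ℝ := (μ₀.mass : ℝ) with hm_def
    have hm : 0 < m := by
      rw [hm_def]
      exact_mod_cast pos_iff_ne_zero.mpr hm0
    set K : ℝ := k (2 * m) with hK_def
    have hK : 0 < K := hk_pos _ (by linarith)
    haveI : Nonempty (Set.Icc (0:ℝ) T) := ⟨⟨0, le_refl 0, hT.le⟩⟩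
    set S : ℝ := ⨆ s : Set.Icc (0:ℝ) T,
        tvDist (ν1 (s : ℝ) : Measure X) (ν2 (s : ℝ) : Measure X) with hS_def
    have hmass : ∀ (ν : ℝ → FiniteMeasure X) (s : ℝ),
        ((ν s : Measure X) Set.univ).toReal = ((ν s).mass : ℝ) := by
      intro ν s
      rw [← FiniteMeasure.ennreal_mass, ENNReal.coe_toReal]
    have hbddS : BddAbove (Set.range fun s : Set.Icc (0:ℝ) T =>
        tvDist (ν1 (s : ℝ) : Measure X) (ν2 (s : ℝ) : Measure X)) := by
      refine ⟨2 * m + 2 * m, ?_⟩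
      rintro _ ⟨s, rfl⟩
      calc tvDist (ν1 (s : ℝ) : Measure X) (ν2 (s : ℝ) : Measure X)
          ≤ ((ν1 (s : ℝ) : Measure X) Set.univ).toReal
            + ((ν2 (s : ℝ) : Measure X) Set.univ).toReal := aux_tvDist_le _ _
        _ ≤ 2 * m + 2 * m := by
            rw [hmass, hmass]
            exact add_le_add (hbdd1 _ s.2) (hbdd2 _ s.2)
    have hSle : ∀ σ ∈ Set.Icc (0:ℝ) T,
        tvDist (ν1 σ : Measure X) (ν2 σ : Measure X) ≤ S :=
      fun σ hσ => le_ciSup hbddS ⟨σ, hσ⟩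
    have hS0 : 0 ≤ S :=
      le_trans (aux_tvDist_nonneg _ _) (hSle 0 ⟨le_refl 0, hT.le⟩)
    -- continuity in σ
    have cont : ∀ (ν : ℝ → FiniteMeasure X),
        (∀ t₀ ∈ Set.Icc (0:ℝ) T,
          Tendsto (fun s => tvDist (ν s : Measure X) (ν t₀ : Measure X))
            (nhdsWithin t₀ (Set.Icc 0 T)) (nhds 0)) →
        (∀ s ∈ Set.Icc (0:ℝ) T, ((ν s).mass : ℝ) ≤ 2 * m) →
        ∀ x, ContinuousOn (fun σ => Sig (ν σ) x) (Set.Icc 0 T) := by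
      intro ν hc hm2 x σ₀ hσ₀
      have h0 : Tendsto (fun σ => K * tvDist (ν σ : Measure X) (ν σ₀ : Measure X))
          (nhdsWithin σ₀ (Set.Icc 0 T)) (nhds (K * 0)) := (hc σ₀ hσ₀).const_mul _
      rw [mul_zero] at h0
      refine tendsto_iff_dist_tendsto_zero.2 (squeeze_zero' ?_ ?_ h0)
      · exact Eventually.of_forall fun _ => dist_nonneg
      · filter_upwards [self_mem_nhdsWithin] with σ hσ
        rw [Real.dist_eq]
        exact hLip (2 * m) (by linarith) _ _ (hm2 σ hσ) (hm2 σ₀ hσ₀) x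
    have cont1 := cont ν1 hcont1 hbdd1
    have cont2 := cont ν2 hcont2 hbdd2
    -- interval integrability on [0, t]
    have integ : ∀ (ν : ℝ → FiniteMeasure X),
        (∀ x, ContinuousOn (fun σ => Sig (ν σ) x) (Set.Icc 0 T)) →
        ∀ x, IntervalIntegrable (fun σ => Sig (ν σ) x) volume 0 t := by
      intro ν hc x
      apply ContinuousOn.intervalIntegrable
      rw [uIcc_of_le ht.1]
      exact (hc x).mono (Icc_subset_Icc_right ht.2)
    have hint1 := integ ν1 cont1
    have hint2 := integ ν2 cont2
    -- measurability in x of the interval integral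
    have measA : ∀ (ν : ℝ → FiniteMeasure X),
        (∀ x, ContinuousOn (fun σ => Sig (ν σ) x) (Set.Icc 0 T)) →
        Measurable fun x : X => ∫ σ in (0:ℝ)..t, Sig (ν σ) x := by
      intro ν hc
      set proj : ℝ → ℝ := fun σ => max 0 (min T σ) with hproj
      have hprojmem : ∀ σ, proj σ ∈ Set.Icc (0:ℝ) T :=
        fun σ => ⟨le_max_left _ _, max_le hT.le (min_le_left _ _)⟩
      have hprojid : ∀ σ ∈ Set.Icc (0:ℝ) T, proj σ = σ := by
        intro σ hσ
        simp only [hproj]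
        rw [min_eq_right hσ.2, max_eq_right hσ.1]
      have hH : Measurable fun p : ℝ × X => Sig (ν (proj p.1)) p.2 := by
        have hmeasN : ∀ N : ℕ, Measurable fun p : ℝ × X =>
            Sig (ν (proj ((⌊p.1 * ((N:ℝ)+1)⌋ : ℝ) / ((N:ℝ)+1)))) p.2 := by
          intro N
          have haux : Measurable fun q : X × ℤ =>
              Sig (ν (proj ((q.2 : ℝ) / ((N:ℝ)+1)))) q.1 :=
            measurable_from_prod_countable_left fun j => by
              simpa using (hB (ν (proj ((j : ℝ) / ((N:ℝ)+1))))).1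
          exact haux.comp (measurable_snd.prodMk ((measurable_fst.mul_const _).floor))
        apply measurable_of_tendsto_metrizable hmeasN
        rw [tendsto_pi_nhds]
        intro p
        have hprojcont : Continuous proj :=
          continuous_const.max (continuous_const.min continuous_id)
        have h1 : Tendsto (fun N : ℕ => proj ((⌊p.1 * ((N:ℝ)+1)⌋ : ℝ) / ((N:ℝ)+1))) atTop
            (nhds (proj p.1)) := (hprojcont.tendsto _).comp (aux_floor_tendsto p.1)
        have h2 : Tendsto (fun N : ℕ => proj ((⌊p.1 * ((N:ℝ)+1)⌋ : ℝ) / ((N:ℝ)+1))) atTop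
            (nhdsWithin (proj p.1) (Set.Icc 0 T)) :=
          tendsto_nhdsWithin_of_tendsto_nhds_of_eventually_within _ h1
            (Eventually.of_forall fun N => hprojmem _)
        exact Filter.Tendsto.comp (hc p.2 (proj p.1) (hprojmem p.1)) h2
      have key : (fun x : X => ∫ σ in (0:ℝ)..t, Sig (ν σ) x)
          = fun x : X => ∫ σ, Sig (ν (proj σ)) x ∂(volume.restrict (Set.Ioc (0:ℝ) t)) := by
        funext x
        rw [intervalIntegral.integral_of_le ht.1]
        apply setIntegral_congr_fun measurableSet_Ioc
        intro σ hσ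
        exact congrArg (fun r => Sig (ν r) x) (hprojid σ ⟨hσ.1.le, hσ.2.trans ht.2⟩).symm
      rw [key]
      have hsm : StronglyMeasurable
          (Function.uncurry fun (x : X) (σ : ℝ) => Sig (ν (proj σ)) x) :=
        (hH.comp measurable_swap).stronglyMeasurable
      exact hsm.integral_prod_right.measurable
    have hA1 := measA ν1 cont1
    have hA2 := measA ν2 cont2
    -- upper bound on the integrals
    have hAle : ∀ (ν : ℝ → FiniteMeasure X) (x : X),
        IntervalIntegrable (fun σ => Sig (ν σ) x) volume 0 t →
        (∫ σ in (0:ℝ)..t, Sig (ν σ) x) ≤ n * T := by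
      intro ν x hint
      calc (∫ σ in (0:ℝ)..t, Sig (ν σ) x) ≤ ∫ _ in (0:ℝ)..t, n := by
            apply intervalIntegral.integral_mono_on ht.1 hint intervalIntegrable_const
            intro σ _; exact hbd _ _
        _ = (t - 0) • n := intervalIntegral.integral_const n
        _ ≤ n * T := by rw [smul_eq_mul]; nlinarith [ht.1, ht.2, hn]
    -- bound on the difference of the integrals
    have hdiff : ∀ x : X,
        |(∫ σ in (0:ℝ)..t, Sig (ν1 σ) x) - ∫ σ in (0:ℝ)..t, Sig (ν2 σ) x| ≤ K * S * T := by
      intro x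
      have hsub : (∫ σ in (0:ℝ)..t, Sig (ν1 σ) x) - (∫ σ in (0:ℝ)..t, Sig (ν2 σ) x)
          = ∫ σ in (0:ℝ)..t, (Sig (ν1 σ) x - Sig (ν2 σ) x) :=
        (intervalIntegral.integral_sub (hint1 x) (hint2 x)).symm
      rw [hsub]
      have hb : ∀ σ ∈ Set.uIoc (0:ℝ) t, ‖Sig (ν1 σ) x - Sig (ν2 σ) x‖ ≤ K * S := by
        intro σ hσ
        rw [uIoc_of_le ht.1] at hσ
        have hσ' : σ ∈ Set.Icc (0:ℝ) T := ⟨hσ.1.le, hσ.2.trans ht.2⟩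
        rw [Real.norm_eq_abs]
        calc |Sig (ν1 σ) x - Sig (ν2 σ) x|
            ≤ K * tvDist (ν1 σ : Measure X) (ν2 σ : Measure X) :=
              hLip (2 * m) (by linarith) _ _ (hbdd1 σ hσ') (hbdd2 σ hσ') x
          _ ≤ K * S := mul_le_mul_of_nonneg_left (hSle σ hσ') hK.le
      calc |∫ σ in (0:ℝ)..t, (Sig (ν1 σ) x - Sig (ν2 σ) x)|
          ≤ K * S * |t - 0| := intervalIntegral.norm_integral_le_of_norm_le_const hb
        _ ≤ K * S * T := by
            rw [sub_zero, abs_of_nonneg ht.1]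
            exact mul_le_mul_of_nonneg_left ht.2 (mul_nonneg hK.le hS0)
    -- pointwise bound on exponentials
    set C : ℝ := Real.exp (n * T) * (K * S * T) with hC_def
    have hC0 : 0 ≤ C :=
      mul_nonneg (Real.exp_nonneg _) (mul_nonneg (mul_nonneg hK.le hS0) hT.le)
    have hptw : ∀ x : X,
        |Real.exp (∫ σ in (0:ℝ)..t, Sig (ν1 σ) x)
          - Real.exp (∫ σ in (0:ℝ)..t, Sig (ν2 σ) x)| ≤ C := by
      intro x
      calc |Real.exp (∫ σ in (0:ℝ)..t, Sig (ν1 σ) x)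
            - Real.exp (∫ σ in (0:ℝ)..t, Sig (ν2 σ) x)|
          ≤ Real.exp (n * T) *
            |(∫ σ in (0:ℝ)..t, Sig (ν1 σ) x) - ∫ σ in (0:ℝ)..t, Sig (ν2 σ) x| :=
            aux_exp_lip (hAle ν1 x (hint1 x)) (hAle ν2 x (hint2 x))
        _ ≤ C := mul_le_mul_of_nonneg_left (hdiff x) (Real.exp_nonneg _)
    -- conclude
    have main := aux_tv_withDensity (μ₀ : Measure X)
      (fun x => Real.exp (∫ σ in (0:ℝ)..t, Sig (ν1 σ) x))
      (fun x => Real.exp (∫ σ in (0:ℝ)..t, Sig (ν2 σ) x))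
      (Real.measurable_exp.comp hA1) (Real.measurable_exp.comp hA2)
      (fun x => Real.exp_nonneg _) (fun x => Real.exp_nonneg _) hC0 hptw
    have hμuniv : ((μ₀ : Measure X) Set.univ).toReal = m := by
      rw [← FiniteMeasure.ennreal_mass, ENNReal.coe_toReal]
    calc tvDist (semigroupMeasure (μ₀ : Measure X) Sig ν1 t)
          (semigroupMeasure (μ₀ : Measure X) Sig ν2 t)
        ≤ C * ((μ₀ : Measure X) Set.univ).toReal := main
      _ = K * T * Real.exp (n * T) * m * S := by rw [hμuniv, hC_def]; ring
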